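/- arXiv:2205.13163 — 8 statements merged into one kernel-verified Lean document; each statement's English description precedes it below -/
import Mathlib

section
/- Let S be a random m×n real matrix, ε, δ ∈ (0,1), and p ≥ 1 an integer. If S has the (ε,δ,p)-JL moment property, then for any positive integers a and b, the random matrix M = I_a ⊗ S ⊗ I_b (Kronecker product with identity matrices) also has the (ε,δ,p)-JL moment property: for every unit vector y ∈ ℝ^{a·n·b}, E|‖My‖₂² − 1|^p < ε^p·δ and E‖My‖₂² = 1. -/
open MeasureTheory ProbabilityTheory Matrix Kronecker

/-- The squared Euclidean norm of a finitely-indexed real vector. -/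
noncomputable def sqNorm {ι : Type*} [Fintype ι] (v : ι → ℝ) : ℝ := ∑ i, v i ^ 2

/-- A random matrix `S` has the `(ε,δ,p)`-JL moment property if for every unit vector `x`,
`E|‖Sx‖₂² − 1|^p < ε^p·δ` and `E‖Sx‖₂² = 1`. -/
def HasJLMoment {Ω : Type*} [MeasurableSpace Ω] (μ : Measure Ω)
    {ι κ : Type*} [Fintype ι] [Fintype κ] (S : Ω → Matrix ι κ ℝ) (ε δ : ℝ) (p : ℕ) : Prop :=
  ∀ x : κ → ℝ, sqNorm x = 1 →
    (∫ ω, |sqNorm (S ω *ᵥ x) - 1| ^ p ∂μ) < ε ^ p * δ ∧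
    (∫ ω, sqNorm (S ω *ᵥ x) ∂μ) = 1

/-!
Write `y` as the family of slices `y_q = y ((i, ·), j)`, `q = (i, j)`. Then
`‖My‖² = ∑_q ‖S y_q‖² = ∑_q w_q ‖S u_q‖²`, where the weights `w_q = ‖y_q‖²` sum to `1` and
`u_q` is the unit vector along `y_q`. So `‖My‖² - 1 = ∑_q w_q (‖S u_q‖² - 1)` is a convex
combination, and both moment conditions for `M` follow from those of `S` at the `u_q`, by
linearity of expectation and by Jensen's inequality for `|·| ^ p`.
-/

section SqNorm

variable {κ : Type*} [Fintype κ]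

lemma sqNorm_nonneg (v : κ → ℝ) : 0 ≤ sqNorm v :=
  Finset.sum_nonneg fun _ _ => sq_nonneg _

lemma sqNorm_smul (t : ℝ) (v : κ → ℝ) : sqNorm (t • v) = t ^ 2 * sqNorm v := by
  simp [sqNorm, Finset.mul_sum, mul_pow]

lemma sqNorm_eq_zero_iff {v : κ → ℝ} : sqNorm v = 0 ↔ v = 0 := by
  simp [sqNorm, Finset.sum_eq_zero_iff_of_nonneg fun i _ => sq_nonneg (v i), funext_iff]

noncomputable def normalizeVec (x : κ → ℝ) : κ → ℝ := (√(sqNorm x))⁻¹ • x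

lemma sqNorm_normalizeVec {x : κ → ℝ} (hx : sqNorm x ≠ 0) : sqNorm (normalizeVec x) = 1 := by
  rw [normalizeVec, sqNorm_smul, inv_pow, Real.sq_sqrt (sqNorm_nonneg x), inv_mul_cancel₀ hx]

lemma sqNorm_mulVec_eq_mul_sqNorm_mulVec_normalizeVec {ι : Type*} [Fintype ι]
    (A : Matrix ι κ ℝ) (x : κ → ℝ) :
    sqNorm (A *ᵥ x) = sqNorm x * sqNorm (A *ᵥ normalizeVec x) := by
  rcases eq_or_ne (sqNorm x) 0 with hx | hx
  · simp [sqNorm_eq_zero_iff.1 hx, sqNorm]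
  · rw [normalizeVec, mulVec_smul, sqNorm_smul, inv_pow, Real.sq_sqrt (sqNorm_nonneg x),
      mul_inv_cancel_left₀ hx]

end SqNorm

section MiddleSlice

variable {R α κ γ : Type*}

def middleSlice (y : (α × κ) × γ → R) (q : α × γ) : κ → R := fun c => y ((q.1, c), q.2)

lemma kronecker_one_mulVec_middleSlice [Semiring R] [Fintype α] [Fintype κ] [Fintype γ]
    [DecidableEq α] [DecidableEq γ] {ι : Type*} (S : Matrix ι κ R)
    (y : (α × κ) × γ → R) (q : α × γ) :
    middleSlice ((((1 : Matrix α α R) ⊗ₖ S) ⊗ₖ (1 : Matrix γ γ R)) *ᵥ y) q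
      = S *ᵥ middleSlice y q := by
  ext r
  simp [middleSlice, mulVec, dotProduct, Fintype.sum_prod_type, kroneckerMap_apply, one_apply]

lemma sqNorm_eq_sum_sqNorm_middleSlice [Fintype α] [Fintype κ] [Fintype γ]
    (y : (α × κ) × γ → ℝ) : sqNorm y = ∑ q, sqNorm (middleSlice y q) := by
  simp only [sqNorm, middleSlice, Fintype.sum_prod_type]
  exact Finset.sum_congr rfl fun _ _ => Finset.sum_comm

end MiddleSlice

lemma abs_sum_mul_pow_le {ι : Type*} [Fintype ι] (p : ℕ) {w : ι → ℝ} (hw : ∀ i, 0 ≤ w i)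
    (hw1 : ∑ i, w i = 1) (t : ι → ℝ) :
    |∑ i, w i * t i| ^ p ≤ ∑ i, w i * |t i| ^ p := by
  calc |∑ i, w i * t i| ^ p ≤ (∑ i, w i * |t i|) ^ p := by
        gcongr
        refine (Finset.abs_sum_le_sum_abs _ _).trans_eq (Finset.sum_congr rfl fun i _ => ?_)
        rw [abs_mul, abs_of_nonneg (hw i)]
    _ ≤ ∑ i, w i * |t i| ^ p :=
        Real.pow_arith_mean_le_arith_mean_pow _ _ _ (fun i _ => hw i) hw1
          (fun i _ => abs_nonneg _) p

section ConvexCombination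

variable {Ω : Type*} [MeasurableSpace Ω] {μ : Measure Ω}

lemma integrable_abs_pow_of_abs_le [IsFiniteMeasure μ] {g h : Ω → ℝ} {p : ℕ} {c : ℝ}
    (hg : Integrable (fun ω => |g ω| ^ p) μ) (hh : AEStronglyMeasurable h μ) (hc : 0 ≤ c)
    (hle : ∀ ω, |h ω| ≤ c * (|g ω| + 1)) :
    Integrable (fun ω => |h ω| ^ p) μ := by
  refine ((hg.add (integrable_const 1)).const_mul (c ^ p * 2 ^ (p - 1))).mono'
    (hh.norm.pow p) (Filter.Eventually.of_forall fun ω => ?_)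
  rw [Real.norm_eq_abs, abs_of_nonneg (by positivity), mul_assoc]
  calc |h ω| ^ p ≤ (c * (|g ω| + 1)) ^ p := by gcongr; exact hle ω
    _ = c ^ p * (|g ω| + 1) ^ p := mul_pow _ _ _
    _ ≤ c ^ p * (2 ^ (p - 1) * (|g ω| ^ p + 1)) := by
      gcongr; simpa using add_pow_le (abs_nonneg (g ω)) zero_le_one p

variable {ι : Type*} [Fintype ι] {w : ι → ℝ} {f : ι → Ω → ℝ}

lemma integral_sum_mul_eq_one (hw1 : ∑ i, w i = 1) (hf : ∀ i, w i ≠ 0 → ∫ ω, f i ω ∂μ = 1) :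
    ∫ ω, ∑ i, w i * f i ω ∂μ = 1 := by
  have hint : ∀ i, Integrable (fun ω => w i * f i ω) μ := fun i => by
    rcases eq_or_ne (w i) 0 with hi | hi
    · simp [hi]
    · exact (Integrable.of_integral_ne_zero (by simp [hf i hi])).const_mul _
  rw [integral_finsetSum _ fun i _ => hint i, ← hw1]
  refine Finset.sum_congr rfl fun i _ => ?_
  rcases eq_or_ne (w i) 0 with hi | hi
  · simp [hi]
  · rw [integral_const_mul, hf i hi, mul_one]

lemma integral_abs_sum_mul_sub_one_pow_lt [IsFiniteMeasure μ] {p : ℕ} {C : ℝ}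
    (hw : ∀ i, 0 ≤ w i) (hw1 : ∑ i, w i = 1) (hf : ∀ i ω, 0 ≤ f i ω)
    (hmeas : ∀ i, w i ≠ 0 → AEStronglyMeasurable (f i) μ)
    (hmom : ∀ i, w i ≠ 0 → ∫ ω, |f i ω - 1| ^ p ∂μ < C) :
    ∫ ω, |∑ i, w i * f i ω - 1| ^ p ∂μ < C := by
  obtain ⟨i₀, -, hi₀⟩ := Finset.exists_ne_zero_of_sum_ne_zero (hw1.trans_ne one_ne_zero)
  -- `C > 0`, so the junk value `0` of a non-integrable integral lies below it.
  have hC : 0 < C := (integral_nonneg fun ω => by positivity).trans_lt (hmom i₀ hi₀)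
  by_cases hG : Integrable (fun ω => |∑ i, w i * f i ω - 1| ^ p) μ
  swap
  · rwa [integral_undef hG]
  have hsub : ∀ ω, ∑ i, w i * f i ω - 1 = ∑ i, w i * (f i ω - 1) := fun ω => by
    simp only [mul_sub, Finset.sum_sub_distrib, mul_one, hw1]
  -- `w i * f i ≤ ∑ j, w j * f j` bounds `|f i - 1|` by `(|∑ j, w j * f j - 1| + 1) / w i`.
  have hint : ∀ i, Integrable (fun ω => w i * |f i ω - 1| ^ p) μ := fun i => by
    rcases eq_or_ne (w i) 0 with hi | hi
    · simp [hi]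
    refine (integrable_abs_pow_of_abs_le hG ((hmeas i hi).sub aestronglyMeasurable_const)
      (inv_nonneg.2 (hw i)) fun ω => ?_).const_mul _
    have hle : w i * f i ω ≤ ∑ j, w j * f j ω :=
      Finset.single_le_sum (fun j _ => mul_nonneg (hw j) (hf j ω)) (Finset.mem_univ i)
    have hwi : w i ≤ 1 := hw1 ▸ Finset.single_le_sum (fun j _ => hw j) (Finset.mem_univ i)
    rw [Pi.sub_apply, inv_mul_eq_div, le_div_iff₀ ((hw i).lt_of_ne' hi)]
    rcases abs_cases (f i ω - 1) with ⟨hfi, -⟩ | ⟨hfi, -⟩ <;> rw [hfi] <;>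
      nlinarith [le_abs_self (∑ j, w j * f j ω - 1), abs_nonneg (∑ j, w j * f j ω - 1),
        mul_nonneg (hf i ω) (hw i), hw i]
  calc ∫ ω, |∑ i, w i * f i ω - 1| ^ p ∂μ
      ≤ ∫ ω, ∑ i, w i * |f i ω - 1| ^ p ∂μ := by
        refine integral_mono hG (integrable_finsetSum _ fun i _ => hint i) fun ω => ?_
        rw [hsub]
        exact abs_sum_mul_pow_le p hw hw1 _
    _ = ∑ i, w i * ∫ ω, |f i ω - 1| ^ p ∂μ := by
        rw [integral_finsetSum _ fun i _ => hint i]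
        simp only [integral_const_mul]
    _ < ∑ i, w i * C := by
        refine Finset.sum_lt_sum (fun i _ => ?_) ⟨i₀, Finset.mem_univ _, ?_⟩
        · rcases eq_or_ne (w i) 0 with hi | hi
          · simp [hi]
          · exact mul_le_mul_of_nonneg_left (hmom i hi).le (hw i)
        · exact mul_lt_mul_of_pos_left (hmom i₀ hi₀) ((hw i₀).lt_of_ne' hi₀)
    _ = C := by rw [← Finset.sum_mul, hw1, one_mul]

end ConvexCombination

theorem jlMoment_kronecker_id_general
    {Ω : Type*} [MeasurableSpace Ω] (μ : Measure Ω) [IsProbabilityMeasure μ]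
    {m n : ℕ} (S : Ω → Matrix (Fin m) (Fin n) ℝ) (ε δ : ℝ)
    (p : ℕ) (h : HasJLMoment μ S ε δ p)
    (a b : ℕ) :
    HasJLMoment μ
      (fun ω => ((1 : Matrix (Fin a) (Fin a) ℝ) ⊗ₖ S ω) ⊗ₖ (1 : Matrix (Fin b) (Fin b) ℝ))
      ε δ p := by
  intro y hy
  set w : Fin a × Fin b → ℝ := fun q => sqNorm (middleSlice y q)
  set f : Fin a × Fin b → Ω → ℝ := fun q ω => sqNorm (S ω *ᵥ normalizeVec (middleSlice y q))
  have hw1 : ∑ q, w q = 1 := (sqNorm_eq_sum_sqNorm_middleSlice y).symm.trans hy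
  have hsplit : ∀ ω, sqNorm ((((1 : Matrix (Fin a) (Fin a) ℝ) ⊗ₖ S ω) ⊗ₖ
      (1 : Matrix (Fin b) (Fin b) ℝ)) *ᵥ y) = ∑ q, w q * f q ω := fun ω => by
    rw [sqNorm_eq_sum_sqNorm_middleSlice]
    refine Finset.sum_congr rfl fun q _ => ?_
    rw [kronecker_one_mulVec_middleSlice, sqNorm_mulVec_eq_mul_sqNorm_mulVec_normalizeVec]
  have hblock : ∀ q, w q ≠ 0 → _ := fun q hq => h _ (sqNorm_normalizeVec hq)
  simp only [hsplit]
  refine ⟨integral_abs_sum_mul_sub_one_pow_lt (fun q => sqNorm_nonneg _) hw1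
      (fun q ω => sqNorm_nonneg _) (fun q hq => ?_) (fun q hq => (hblock q hq).1),
    integral_sum_mul_eq_one hw1 fun q hq => (hblock q hq).2⟩
  exact (Integrable.of_integral_ne_zero
    ((hblock q hq).2.trans_ne one_ne_zero)).aestronglyMeasurable

/-- If a random `m×n` matrix `S` has the `(ε,δ,p)`-JL moment property, then for
any positive integers `a, b`, the random matrix `M = I_a ⊗ S ⊗ I_b` also has the
`(ε,δ,p)`-JL moment property. -/
theorem jlMoment_kronecker_id
    {Ω : Type*} [MeasurableSpace Ω] (μ : Measure Ω) [IsProbabilityMeasure μ]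
    {m n : ℕ} (S : Ω → Matrix (Fin m) (Fin n) ℝ) (ε δ : ℝ)
    (hε : ε ∈ Set.Ioo (0 : ℝ) 1) (hδ : δ ∈ Set.Ioo (0 : ℝ) 1)
    (p : ℕ) (hp : 1 ≤ p) (h : HasJLMoment μ S ε δ p)
    (a b : ℕ) (ha : 0 < a) (hb : 0 < b) :
    HasJLMoment μ
      (fun ω => ((1 : Matrix (Fin a) (Fin a) ℝ) ⊗ₖ S ω) ⊗ₖ (1 : Matrix (Fin b) (Fin b) ℝ))
      ε δ p :=
  jlMoment_kronecker_id_general μ S ε δ p h a b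
end

section
/- Let V be a finite set with directed edge weights w : V × V → ℝ≥0 and dangling weights d : V → ℝ≥0. Then for any disjoint subsets A, B ⊆ V, the contraction cost identity holds: cutL(A) + cutL(B) − cutL(A,B) = cutD(A) + cutD(B) + cutD(V∖(A∪B), A∪B). -/
/-- Directed cut between two vertex sets: total weight of edges from `A` to `B`. -/
def cutD {V : Type*} [Fintype V] (w : V → V → ℝ) (A B : Finset V) : ℝ :=
  ∑ u ∈ A, ∑ v ∈ B, w u v

/-- Directed cut of a set in the linearization DAG `G_S`:
weight of edges leaving `A` plus the dangling weights of `A`. -/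
def cutDs {V : Type*} [Fintype V] [DecidableEq V] (w : V → V → ℝ) (d : V → ℝ)
    (A : Finset V) : ℝ :=
  cutD w A Aᶜ + ∑ u ∈ A, d u

/-- Undirected cut between two sets in the graph `L`: edges in either direction. -/
def cutL2 {V : Type*} [Fintype V] (w : V → V → ℝ) (A B : Finset V) : ℝ :=
  cutD w A B + cutD w B A

/-- Undirected cut of a set in the graph `L`: edges crossing `A` in either direction plus the
dangling weights of `A`. -/
def cutLs {V : Type*} [Fintype V] [DecidableEq V] (w : V → V → ℝ) (d : V → ℝ)
    (A : Finset V) : ℝ :=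
  cutD w A Aᶜ + cutD w Aᶜ A + ∑ u ∈ A, d u

lemma cutD_union_right {V : Type*} [Fintype V] [DecidableEq V] (w : V → V → ℝ)
    (A B C : Finset V) (h : Disjoint B C) :
    cutD w A (B ∪ C) = cutD w A B + cutD w A C := by
  simp [cutD, Finset.sum_union h, Finset.sum_add_distrib]

lemma cutD_union_left {V : Type*} [Fintype V] [DecidableEq V] (w : V → V → ℝ)
    (A B C : Finset V) (h : Disjoint A B) :
    cutD w (A ∪ B) C = cutD w A C + cutD w B C := by
  simp [cutD, Finset.sum_union h]

lemma compl_eq_union {V : Type*} [Fintype V] [DecidableEq V]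
    (A B : Finset V) (h : Disjoint A B) : Aᶜ = B ∪ (A ∪ B)ᶜ := by
  ext x
  simp only [Finset.mem_compl, Finset.mem_union]
  constructor
  · intro hx; by_cases hb : x ∈ B <;> simp [hx, hb]
  · rintro (hb | hx)
    · exact fun hA => (Finset.disjoint_left.mp h hA hb)
    · exact fun hA => hx (Or.inl hA)

/-- Lemma C.2. For disjoint `A, B`, the contraction cost identity:
`cutL(A) + cutL(B) − cutL(A,B) = cutD(A) + cutD(B) + cutD(V∖(A∪B), A∪B)`. -/
theorem contraction_cost_eq
    {V : Type*} [Fintype V] [DecidableEq V] (w : V → V → ℝ) (d : V → ℝ)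
    (hw : ∀ u v, 0 ≤ w u v) (hd : ∀ v, 0 ≤ d v)
    (A B : Finset V) (hAB : Disjoint A B) :
    cutLs w d A + cutLs w d B - cutL2 w A B =
      cutDs w d A + cutDs w d B + cutD w (A ∪ B)ᶜ (A ∪ B) := by
  have hBC : Disjoint B (A ∪ B)ᶜ := Disjoint.mono_left Finset.subset_union_right disjoint_compl_right
  have hAC : Disjoint A (A ∪ B)ᶜ := Disjoint.mono_left Finset.subset_union_left disjoint_compl_right
  have hA : Aᶜ = B ∪ (A ∪ B)ᶜ := compl_eq_union A B hAB
  have hB : Bᶜ = A ∪ (A ∪ B)ᶜ := by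
    rw [compl_eq_union B A hAB.symm, Finset.union_comm B A]
  simp only [cutLs, cutDs, cutL2, hA, hB,
    cutD_union_right w A B (A ∪ B)ᶜ hBC, cutD_union_right w B A (A ∪ B)ᶜ hAC,
    cutD_union_left w B (A ∪ B)ᶜ A hBC, cutD_union_left w A (A ∪ B)ᶜ B hAC,
    cutD_union_right w (A ∪ B)ᶜ A B hAB]
  ring
end

section
/- Let V be a finite set equipped with a linear order, with directed edge weights w : V × V → ℝ≥0 satisfying w(u,v) = 0 unless u < v, and dangling weights d : V → ℝ≥0. Suppose V is partitioned as V = D ⊔ E where every element of D is smaller than every element of E in the order, and w(u,v) = 0 whenever both u, v ∈ D. Let c ≥ 0 and suppose cutD({v}) ≥ c for every v ∈ E. Then for any subset U ⊆ V that contains some vertex v with cutD({v}) ≥ c, one has cutD(U) ≥ c. -/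
/-- If `v ∈ U` and all edges from `v` into `U` have weight zero, then the cut of `U`
dominates the cut of `{v}`. -/
lemma cutDs_single_le {V : Type*} [Fintype V] [DecidableEq V] (w : V → V → ℝ) (d : V → ℝ)
    (hw : ∀ u v, 0 ≤ w u v) (hd : ∀ v, 0 ≤ d v)
    (U : Finset V) (v : V) (hv : v ∈ U) (h0 : ∀ u ∈ U, w v u = 0) :
    cutDs w d {v} ≤ cutDs w d U := by
  unfold cutDs cutD
  have h1 : ∑ x ∈ ({v} : Finset V)ᶜ, w v x = ∑ x ∈ Uᶜ, w v x := by
    have e1 : ∑ x ∈ ({v} : Finset V)ᶜ, w v x + ∑ x ∈ ({v} : Finset V), w v x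
        = ∑ x ∈ Uᶜ, w v x + ∑ x ∈ U, w v x := by
      rw [Finset.sum_compl_add_sum, Finset.sum_compl_add_sum]
    have e2 : ∑ x ∈ ({v} : Finset V), w v x = 0 := by
      simp [h0 v hv]
    have e3 : ∑ x ∈ U, w v x = 0 := Finset.sum_eq_zero h0
    linarith
  simp only [Finset.sum_singleton, h1]
  have hA : ∑ x ∈ Uᶜ, w v x ≤ ∑ u ∈ U, ∑ x ∈ Uᶜ, w u x :=
    Finset.single_le_sum (fun u _ => Finset.sum_nonneg fun x _ => hw u x) hv
  have hB : d v ≤ ∑ u ∈ U, d u :=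
    Finset.single_le_sum (fun u _ => hd u) hv
  linarith

/-- Lemma C.3. In a sketching linearization DAG whose vertex set is
partitioned into data vertices `D` (ordered first, with no edges among them) and embedding
vertices `E`, each vertex of `E` having effective sketch dimension at least `c`, any subset
`U` containing a vertex of effective sketch dimension at least `c` satisfies
`cutD(U) ≥ c`. -/
theorem cutD_subset_ge
    {V : Type*} [Fintype V] [LinearOrder V] (w : V → V → ℝ) (d : V → ℝ)
    (hw : ∀ u v, 0 ≤ w u v) (hd : ∀ v, 0 ≤ d v)
    (hupper : ∀ u v : V, ¬u < v → w u v = 0)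
    (D E : Finset V) (hdisj : Disjoint D E) (hcover : D ∪ E = Finset.univ)
    (horder : ∀ u ∈ D, ∀ v ∈ E, u < v)
    (hDD : ∀ u ∈ D, ∀ v ∈ D, w u v = 0)
    (c : ℝ) (hc : 0 ≤ c)
    (hE : ∀ v ∈ E, c ≤ cutDs w d {v}) :
    ∀ U : Finset V, (∃ v ∈ U, c ≤ cutDs w d {v}) → c ≤ cutDs w d U := by
  rintro U ⟨v₀, hv₀, hcv₀⟩
  have hne : U.Nonempty := ⟨v₀, hv₀⟩
  obtain ⟨m, hm, hmax⟩ := U.exists_max_image id hne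
  have hmV : m ∈ D ∪ E := by rw [hcover]; exact Finset.mem_univ m
  rcases Finset.mem_union.mp hmV with hmD | hmE
  · -- m ∈ D, so U ⊆ D
    have hUD : ∀ u ∈ U, u ∈ D := by
      intro u hu
      have huV : u ∈ D ∪ E := by rw [hcover]; exact Finset.mem_univ u
      rcases Finset.mem_union.mp huV with h | h
      · exact h
      · exact absurd (horder m hmD u h) (not_lt.mpr (hmax u hu))
    exact le_trans hcv₀
      (cutDs_single_le w d hw hd U v₀ hv₀ fun u hu => hDD v₀ (hUD v₀ hv₀) u (hUD u hu))
  · -- m ∈ E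
    exact le_trans (hE m hmE)
      (cutDs_single_le w d hw hd U m hm fun u hu =>
        hupper m u (not_lt.mpr (hmax u hu)))
end

section
/- Let V be a finite set equipped with a linear order, with directed edge weights w : V × V → ℝ≥0 satisfying w(u,v) = 0 unless u < v, and dangling weights d : V → ℝ≥0. Let c ≥ 0 and suppose cutD({v}) ≥ c for every v ∈ V. Then for every nonempty subset W ⊆ V, cutD(W) ≥ c. -/
/-- Lemma E.1. In a linearization DAG in which every vertex has effective
sketch dimension at least `c`, every nonempty subset `W` satisfies `cutD(W) ≥ c`. -/
theorem cutD_nonempty_ge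
    {V : Type*} [Fintype V] [LinearOrder V] (w : V → V → ℝ) (d : V → ℝ)
    (hw : ∀ u v, 0 ≤ w u v) (hd : ∀ v, 0 ≤ d v)
    (hupper : ∀ u v : V, ¬u < v → w u v = 0)
    (c : ℝ) (hc : 0 ≤ c)
    (hall : ∀ v : V, c ≤ cutDs w d {v}) :
    ∀ W : Finset V, W.Nonempty → c ≤ cutDs w d W := by
  intro W hW
  classical
  set v := W.max' hW with hv
  have hvW : v ∈ W := W.max'_mem hW
  refine le_trans (hall v) ?_
  unfold cutDs cutD
  have h1 : ∑ u ∈ ({v} : Finset V), ∑ x ∈ ({v} : Finset V)ᶜ, w u x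
      = ∑ x ∈ ({v} : Finset V)ᶜ, w v x := by simp
  have hsub : Wᶜ ⊆ ({v} : Finset V)ᶜ := by
    intro x hx
    simp only [Finset.mem_compl, Finset.mem_singleton] at *
    rintro rfl; exact hx hvW
  have h2 : ∑ x ∈ ({v} : Finset V)ᶜ, w v x = ∑ x ∈ Wᶜ, w v x := by
    refine (Finset.sum_subset hsub ?_).symm
    intro x hx hxW
    have hxW' : x ∈ W := by
      by_contra h; exact hxW (Finset.mem_compl.mpr h)
    have hxv : x ≠ v := by simpa using hx
    exact hupper v x (not_lt.mpr (lt_of_le_of_ne (W.le_max' x hxW') hxv).le)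
  rw [h1, h2]
  have h3 : ∑ x ∈ Wᶜ, w v x ≤ ∑ u ∈ W, ∑ x ∈ Wᶜ, w u x :=
    Finset.single_le_sum (fun u _ => Finset.sum_nonneg fun x _ => hw u x) hvW
  have h4 : ∑ u ∈ ({v} : Finset V), d u ≤ ∑ u ∈ W, d u := by
    simpa using Finset.single_le_sum (fun u _ => hd u) hvW
  simpa using add_le_add h3 h4
end

section
/- Let V be a finite set carrying two weight structures: (i) directed edge weights w : V × V → ℝ≥0 and dangling weights d : V → ℝ≥0 (the linearization DAG G_S), and (ii) a finite index set I of hyperedges with nonnegative weights ω : I → ℝ, vertex sets S : I → P(V), and dangling hyperedge set I₀ ⊆ I (the hypergraph R). Then for any disjoint subsets U, W ⊆ V, the total contraction cost exponent satisfies: [cutR(U) + cutR(W) − cutR(U,W)] + [cutL(U) + cutL(W) − cutL(U,W)] ≥ cutR(U) + cutD(U) + cutD(W). -/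
/-- Hypergraph cut between disjoint vertex sets `A` and `B`: total weight of hyperedges meeting
both `A` and `B`. -/
def cutR {V I : Type*} [Fintype V] [DecidableEq V] [Fintype I]
    (ωw : I → ℝ) (S : I → Finset V) (A B : Finset V) : ℝ :=
  ∑ e ∈ Finset.univ.filter (fun e => (S e ∩ A).Nonempty ∧ (S e ∩ B).Nonempty), ωw e

/-- Weight of uncontracted (dangling) hyperedges lying entirely inside `A`. -/
def cutRstar {V I : Type*} [Fintype V] [DecidableEq V] [Fintype I]
    (ωw : I → ℝ) (S : I → Finset V) (I₀ : Finset I) (A : Finset V) : ℝ :=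
  ∑ e ∈ I₀.filter (fun e => (S e).Nonempty ∧ S e ⊆ A), ωw e

/-- Hypergraph cut of a set: `cutR(A) = cutR(A, V∖A) + cutR(A,*)`. -/
def cutRs {V I : Type*} [Fintype V] [DecidableEq V] [Fintype I]
    (ωw : I → ℝ) (S : I → Finset V) (I₀ : Finset I) (A : Finset V) : ℝ :=
  cutR ωw S A Aᶜ + cutRstar ωw S I₀ A

/-- core inequality of Lemma E.2. For disjoint `U, W`, the logarithm of the
total contraction cost, `costR(U,W) + costL(U,W)`, is at least
`cutR(U) + cutD(U) + cutD(W)`. -/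
theorem total_contraction_cost_ge
    {V I : Type*} [Fintype V] [DecidableEq V] [Fintype I]
    (w : V → V → ℝ) (d : V → ℝ) (hw : ∀ u v, 0 ≤ w u v) (hd : ∀ v, 0 ≤ d v)
    (ωw : I → ℝ) (hω : ∀ e, 0 ≤ ωw e) (S : I → Finset V) (I₀ : Finset I)
    (U W : Finset V) (hUW : Disjoint U W) :
    cutRs ωw S I₀ U + cutDs w d U + cutDs w d W ≤
      (cutRs ωw S I₀ U + cutRs ωw S I₀ W - cutR ωw S U W) +
        (cutLs w d U + cutLs w d W - cutL2 w U W) := by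
  have hmono : ∀ (A B B' : Finset V), B ⊆ B' → cutD w A B ≤ cutD w A B' := by
    intro A B B' h
    unfold cutD
    exact Finset.sum_le_sum fun u _ =>
      Finset.sum_le_sum_of_subset_of_nonneg h (fun v _ _ => hw u v)
  have hUW' : W ⊆ Uᶜ := fun x hx => Finset.mem_compl.mpr fun hxU => Finset.disjoint_left.mp hUW hxU hx
  have hWU' : U ⊆ Wᶜ := fun x hx => Finset.mem_compl.mpr fun hxW => Finset.disjoint_left.mp hUW hx hxW
  have h1 : cutD w U W ≤ cutD w Wᶜ W := by
    unfold cutD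
    exact Finset.sum_le_sum_of_subset_of_nonneg hWU'
      (fun u _ _ => Finset.sum_nonneg fun v _ => hw u v)
  have h2 : cutD w W U ≤ cutD w Uᶜ U := by
    unfold cutD
    exact Finset.sum_le_sum_of_subset_of_nonneg hUW'
      (fun u _ _ => Finset.sum_nonneg fun v _ => hw u v)
  have h3 : cutR ωw S U W ≤ cutR ωw S W Wᶜ := by
    unfold cutR
    apply Finset.sum_le_sum_of_subset_of_nonneg
    · intro e he
      simp only [Finset.mem_filter, Finset.mem_univ, true_and] at he ⊢
      obtain ⟨h1', h2'⟩ := he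
      refine ⟨h2', ?_⟩
      obtain ⟨x, hx⟩ := h1'
      simp only [Finset.mem_inter] at hx
      exact ⟨x, Finset.mem_inter.mpr ⟨hx.1, hWU' hx.2⟩⟩
    · intro e _ _; exact hω e
  have h4 : 0 ≤ cutRstar ωw S I₀ W := Finset.sum_nonneg fun e _ => hω e
  unfold cutRs cutDs cutLs cutL2 at *
  linarith
end

section
/- Let V be a finite set with directed edge weights w : V × V → ℝ≥0 and dangling weights d : V → ℝ≥0. Let A, B ⊆ V be disjoint subsets and let x ∈ A be a vertex such that w(x, v) = 0 for every v ∈ (A ∪ B) ∖ {x}. Then cutD(A ∪ B) ≥ cutD({x}) + cutD(B) − cutD(B, A). -/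
/-- inequality (29) in the proof of Lemma E.4. If `A, B` are disjoint,
`x ∈ A`, and `x` has no outgoing edges into `(A ∪ B) ∖ {x}`, then
`cutD(A ∪ B) ≥ cutD({x}) + cutD(B) − cutD(B, A)`. -/
theorem cutD_union_ge_of_no_edges
    {V : Type*} [Fintype V] [DecidableEq V] (w : V → V → ℝ) (d : V → ℝ)
    (hw : ∀ u v, 0 ≤ w u v) (hd : ∀ v, 0 ≤ d v)
    (A B : Finset V) (hAB : Disjoint A B) (x : V) (hx : x ∈ A)
    (hzero : ∀ v ∈ (A ∪ B) \ {x}, w x v = 0) :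
    cutDs w d {x} + cutDs w d B - cutD w B A ≤ cutDs w d (A ∪ B) := by
  classical
  have hxAB : x ∈ A ∪ B := Finset.mem_union_left _ hx
  unfold cutDs cutD
  rw [Finset.sum_singleton, Finset.sum_singleton]
  -- split {x}ᶜ
  have h1 : ∑ v ∈ ({x} : Finset V)ᶜ, w x v = ∑ v ∈ (A ∪ B)ᶜ, w x v := by
    have hsplit : ({x} : Finset V)ᶜ = ((A ∪ B) \ {x}) ∪ (A ∪ B)ᶜ := by
      ext v
      simp only [Finset.mem_compl, Finset.mem_singleton, Finset.mem_union,
        Finset.mem_sdiff]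
      constructor
      · intro hv
        by_cases hAB' : v ∈ A ∨ v ∈ B
        · left; exact ⟨hAB', hv⟩
        · right; simpa using hAB'
      · rintro (⟨_, hv⟩ | hv)
        · exact hv
        · intro h; subst h; exact hv (Finset.mem_union.1 hxAB)
    have hdisj : Disjoint ((A ∪ B) \ {x}) ((A ∪ B)ᶜ) := by
      refine Finset.disjoint_left.2 fun v hv hv' => ?_
      exact (Finset.mem_compl.1 hv') (Finset.mem_sdiff.1 hv).1
    rw [hsplit, Finset.sum_union hdisj]
    have : ∑ v ∈ (A ∪ B) \ {x}, w x v = 0 :=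
      Finset.sum_eq_zero fun v hv => hzero v hv
    rw [this, zero_add]
  -- split Bᶜ
  have h2 : ∀ u, ∑ v ∈ Bᶜ, w u v = ∑ v ∈ A, w u v + ∑ v ∈ (A ∪ B)ᶜ, w u v := by
    intro u
    have hsplit : (B : Finset V)ᶜ = A ∪ (A ∪ B)ᶜ := by
      ext v
      simp only [Finset.mem_compl, Finset.mem_union]
      constructor
      · intro hv
        by_cases hvA : v ∈ A
        · left; exact hvA
        · right; push_neg; exact ⟨hvA, hv⟩
      · rintro (hv | hv)
        · exact Finset.disjoint_left.1 hAB hv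
        · push_neg at hv; exact hv.2
    have hdisj : Disjoint A ((A ∪ B)ᶜ) := by
      refine Finset.disjoint_left.2 fun v hv hv' => ?_
      exact (Finset.mem_compl.1 hv') (Finset.mem_union_left _ hv)
    rw [hsplit, Finset.sum_union hdisj]
  have h3 : ∑ u ∈ A ∪ B, ∑ v ∈ (A ∪ B)ᶜ, w u v
      = ∑ u ∈ A, ∑ v ∈ (A ∪ B)ᶜ, w u v + ∑ u ∈ B, ∑ v ∈ (A ∪ B)ᶜ, w u v :=
    Finset.sum_union hAB
  have h4 : ∑ u ∈ A ∪ B, d u = ∑ u ∈ A, d u + ∑ u ∈ B, d u :=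
    Finset.sum_union hAB
  have h5 : ∑ u ∈ B, ∑ v ∈ Bᶜ, w u v
      = ∑ u ∈ B, ∑ v ∈ A, w u v + ∑ u ∈ B, ∑ v ∈ (A ∪ B)ᶜ, w u v := by
    rw [← Finset.sum_add_distrib]
    exact Finset.sum_congr rfl fun u _ => h2 u
  -- key single-element bounds
  have h6 : ∑ v ∈ (A ∪ B)ᶜ, w x v ≤ ∑ u ∈ A, ∑ v ∈ (A ∪ B)ᶜ, w u v :=
    Finset.single_le_sum (fun u _ => Finset.sum_nonneg fun v _ => hw u v) hx
  have h7 : d x ≤ ∑ u ∈ A, d u :=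
    Finset.single_le_sum (fun u _ => hd u) hx
  rw [h1, h3, h4, h5]
  linarith
end

section
/- Let V be a finite set equipped with a linear order, with directed edge weights w : V × V → ℝ≥0 satisfying w(u,v) = 0 unless u < v, and dangling weights d : V → ℝ≥0. Let c ≥ 0 and suppose cutD({v}) ≥ c for every v ∈ V. Then for any two disjoint nonempty subsets A, B ⊆ V, the contraction cost exponent in the graph L satisfies cutL(A) + cutL(B) − cutL(A,B) ≥ 2c. -/
open Finset

private lemma cutD_nonneg' {V : Type*} [Fintype V] (w : V → V → ℝ)
    (hw : ∀ u v, 0 ≤ w u v) (A B : Finset V) : 0 ≤ cutD w A B :=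
  Finset.sum_nonneg fun _ _ => Finset.sum_nonneg fun _ _ => hw _ _

private lemma cutD_split' {V : Type*} [Fintype V] [DecidableEq V] (w : V → V → ℝ)
    (A B C : Finset V) (h : B ⊆ C) :
    cutD w A C = cutD w A (C \ B) + cutD w A B := by
  unfold cutD
  rw [← Finset.sum_add_distrib]
  exact Finset.sum_congr rfl fun u _ => (Finset.sum_sdiff h).symm

private lemma aux' {V : Type*} [Fintype V] [LinearOrder V] (w : V → V → ℝ) (d : V → ℝ)
    (hw : ∀ u v, 0 ≤ w u v) (hd : ∀ v, 0 ≤ d v)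
    (hupper : ∀ u v : V, ¬u < v → w u v = 0)
    (c : ℝ)
    (hall : ∀ v : V, c ≤ cutDs w d {v})
    (A B : Finset V) (hAB : Disjoint A B) (hA : A.Nonempty) (hB : B.Nonempty)
    (hdom : ∀ x ∈ B, x ≤ A.max' hA) :
    2 * c ≤ cutLs w d A + cutLs w d B - cutL2 w A B := by
  classical
  set a := A.max' hA with ha
  set b := B.max' hB with hb
  have haA : a ∈ A := A.max'_mem hA
  have hbB : b ∈ B := B.max'_mem hB
  have hbAc : b ∈ Aᶜ := by
    simp only [mem_compl]
    exact fun h => (Finset.disjoint_left.mp hAB h) hbB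
  have hAsub : A ⊆ Bᶜ := fun x hx => by
    simp only [mem_compl]; exact fun h => (Finset.disjoint_left.mp hAB hx) h
  have hBsub : B ⊆ Aᶜ := fun x hx => by
    simp only [mem_compl]; exact fun h => (Finset.disjoint_left.mp hAB h) hx
  -- claim 1
  have h1 : c ≤ cutD w A (Aᶜ \ B) + ∑ u ∈ A, d u := by
    have hc1 := hall a
    have hrow : ∑ x ∈ ({a} : Finset V)ᶜ, w a x = ∑ x ∈ Aᶜ \ B, w a x := by
      refine (Finset.sum_subset ?_ ?_).symm
      · intro x hx
        simp only [mem_sdiff, mem_compl, mem_singleton] at hx ⊢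
        intro h; exact hx.1 (h ▸ haA)
      · intro x hx hnx
        simp only [mem_sdiff, mem_compl, mem_singleton, not_and, not_not] at hx hnx
        by_cases hxA : x ∈ A
        · exact hupper a x (not_lt.mpr (A.le_max' x hxA))
        · exact hupper a x (not_lt.mpr (hdom x (hnx (by simpa using hxA))))
    have hds : cutDs w d {a} = ∑ x ∈ Aᶜ \ B, w a x + d a := by
      unfold cutDs cutD
      rw [Finset.sum_singleton, Finset.sum_singleton, hrow]
    have hle1 : ∑ x ∈ Aᶜ \ B, w a x ≤ cutD w A (Aᶜ \ B) :=
      Finset.single_le_sum (f := fun u => ∑ x ∈ Aᶜ \ B, w u x)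
        (fun i _ => Finset.sum_nonneg fun _ _ => hw _ _) haA
    have hle2 : d a ≤ ∑ u ∈ A, d u :=
      Finset.single_le_sum (fun i _ => hd i) haA
    rw [hds] at hc1
    linarith
  -- claim 2
  have h2 : c ≤ cutD w Aᶜ A + cutD w B (Bᶜ \ A) + ∑ u ∈ B, d u := by
    have hc2 := hall b
    have hrow : ∑ x ∈ ({b} : Finset V)ᶜ, w b x = ∑ x ∈ Bᶜ, w b x := by
      refine (Finset.sum_subset ?_ ?_).symm
      · intro x hx
        simp only [mem_compl, mem_singleton] at hx ⊢
        intro h; exact hx (h ▸ hbB)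
      · intro x hx hnx
        simp only [mem_compl, mem_singleton, not_not] at hx hnx
        exact hupper b x (not_lt.mpr (B.le_max' x hnx))
    have hsplit : ∑ x ∈ Bᶜ, w b x = ∑ x ∈ Bᶜ \ A, w b x + ∑ x ∈ A, w b x :=
      (Finset.sum_sdiff hAsub).symm
    have hds : cutDs w d {b} = (∑ x ∈ Bᶜ \ A, w b x + ∑ x ∈ A, w b x) + d b := by
      unfold cutDs cutD
      rw [Finset.sum_singleton, Finset.sum_singleton, hrow, hsplit]
    have hle1 : ∑ x ∈ A, w b x ≤ cutD w Aᶜ A :=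
      Finset.single_le_sum (f := fun u => ∑ x ∈ A, w u x)
        (fun i _ => Finset.sum_nonneg fun _ _ => hw _ _) hbAc
    have hle2 : ∑ x ∈ Bᶜ \ A, w b x ≤ cutD w B (Bᶜ \ A) :=
      Finset.single_le_sum (f := fun u => ∑ x ∈ Bᶜ \ A, w u x)
        (fun i _ => Finset.sum_nonneg fun _ _ => hw _ _) hbB
    have hle3 : d b ≤ ∑ u ∈ B, d u :=
      Finset.single_le_sum (fun i _ => hd i) hbB
    rw [hds] at hc2
    linarith
  have hsA : cutD w A Aᶜ = cutD w A (Aᶜ \ B) + cutD w A B := cutD_split' w A B Aᶜ hBsub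
  have hsB : cutD w B Bᶜ = cutD w B (Bᶜ \ A) + cutD w B A := cutD_split' w B A Bᶜ hAsub
  have hnn : 0 ≤ cutD w Bᶜ B := cutD_nonneg' w hw _ _
  unfold cutLs cutL2
  rw [hsA, hsB]
  linarith

/-- core of Lemma E.3. In a linearization DAG in which every vertex has
effective sketch dimension at least `c ≥ 0`, the contraction cost exponent of any two disjoint
nonempty subsets `A, B` satisfies `cutL(A) + cutL(B) − cutL(A,B) ≥ 2c`. -/
theorem contraction_cost_ge_two_c
    {V : Type*} [Fintype V] [LinearOrder V] (w : V → V → ℝ) (d : V → ℝ)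
    (hw : ∀ u v, 0 ≤ w u v) (hd : ∀ v, 0 ≤ d v)
    (hupper : ∀ u v : V, ¬u < v → w u v = 0)
    (c : ℝ) (hc : 0 ≤ c)
    (hall : ∀ v : V, c ≤ cutDs w d {v})
    (A B : Finset V) (hAB : Disjoint A B) (hA : A.Nonempty) (hB : B.Nonempty) :
    2 * c ≤ cutLs w d A + cutLs w d B - cutL2 w A B := by
  by_cases hcase : ∀ x ∈ B, x ≤ A.max' hA
  · exact aux' w d hw hd hupper c hall A B hAB hA hB hcase
  · push_neg at hcase
    obtain ⟨x0, hx0B, hx0⟩ := hcase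
    have hdom : ∀ x ∈ A, x ≤ B.max' hB := by
      intro x hx
      calc x ≤ A.max' hA := A.le_max' x hx
        _ ≤ x0 := le_of_lt hx0
        _ ≤ B.max' hB := B.le_max' x0 hx0B
    have := aux' w d hw hd hupper c hall B A hAB.symm hB hA hdom
    have hsymm : cutL2 w B A = cutL2 w A B := by unfold cutL2; ring
    linarith
end

section
/- For all real numbers a, b, c, m with a ≥ 1, b ≥ 1, c ≥ 1, m ≥ 1, and a ≤ c: a·m²·√(b·c·m) ≤ m^{3/8} · (a·b·c·m² + m^{5/2}). -/
/-- quantitative core of the graph case of Theorem 4.2. For all reals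
`a, b, c, m ≥ 1` with `a ≤ c`:
`a·m²·√(b·c·m) ≤ m^{3/8} · (a·b·c·m² + m^{5/2})`. -/
theorem sketch_cost_within_m_threeeighths
    (a b c m : ℝ) (ha : 1 ≤ a) (hb : 1 ≤ b) (hc : 1 ≤ c) (hm : 1 ≤ m) (hac : a ≤ c) :
    a * m ^ 2 * Real.sqrt (b * c * m) ≤
      m ^ ((3 : ℝ) / 8) * (a * b * c * m ^ 2 + m ^ ((5 : ℝ) / 2)) := by
  have hm0 : (0 : ℝ) < m := lt_of_lt_of_le one_pos hm
  have hbc0 : (0 : ℝ) ≤ b * c := by nlinarith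
  set B := m ^ ((1 : ℝ) / 8) with hBdef
  have hB1 : (1 : ℝ) ≤ B := Real.one_le_rpow hm (by norm_num)
  have hB0 : (0 : ℝ) ≤ B := by linarith
  have h38 : m ^ ((3 : ℝ) / 8) = B ^ 3 := by
    rw [hBdef, ← Real.rpow_natCast (m ^ ((1:ℝ)/8)) 3, ← Real.rpow_mul hm0.le]
    norm_num
  have h12 : Real.sqrt m = B ^ 4 := by
    rw [hBdef, ← Real.rpow_natCast (m ^ ((1:ℝ)/8)) 4, ← Real.rpow_mul hm0.le,
      Real.sqrt_eq_rpow]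
    norm_num
  have h52 : m ^ ((5 : ℝ) / 2) = m ^ 2 * B ^ 4 := by
    rw [hBdef, ← Real.rpow_natCast (m ^ ((1:ℝ)/8)) 4, ← Real.rpow_mul hm0.le,
      ← Real.rpow_natCast m 2, ← Real.rpow_add hm0]
    norm_num
  set s := Real.sqrt (b * c) with hsdef
  have hsplit : Real.sqrt (b * c * m) = s * B ^ 4 := by
    rw [Real.sqrt_mul hbc0, h12]
  have hss : s * s = b * c := Real.mul_self_sqrt hbc0
  have hs1 : (1 : ℝ) ≤ s := by
    rw [hsdef, show (1:ℝ) = Real.sqrt 1 by simp]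
    exact Real.sqrt_le_sqrt (by nlinarith)
  have hs0 : (0 : ℝ) ≤ s := by linarith
  have ha2 : a ≤ s * s := by rw [hss]; nlinarith
  rw [hsplit, h38, h52]
  have hm2 : (0:ℝ) < m ^ 2 := by positivity
  have e : a * (b * c) * B ^ 3 = a * (s * s) * B ^ 3 := by rw [hss]
  have key : a * s * B ^ 4 ≤ a * (b * c) * B ^ 3 + B ^ 7 := by
    rw [e]
    rcases le_total s B with h | h
    · -- here a*s ≤ s^3 ≤ B^3, so LHS ≤ B^7
      have h1 : a * s ≤ s ^ 3 := by nlinarith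
      have h2 : s ^ 3 ≤ B ^ 3 := pow_le_pow_left₀ hs0 h 3
      nlinarith [pow_pos (lt_of_lt_of_le one_pos hB1) 4,
        mul_nonneg (mul_nonneg (by linarith : (0:ℝ) ≤ a) hbc0) (pow_nonneg hB0 3)]
    · -- here B^4 ≤ s*B^3, so LHS ≤ a*(s*s)*B^3
      nlinarith [mul_nonneg (mul_nonneg (mul_nonneg (by linarith : (0:ℝ) ≤ a) hs0)
        (pow_nonneg hB0 3)) (sub_nonneg.2 h), pow_nonneg hB0 7]
  nlinarith [mul_le_mul_of_nonneg_left key hm2.le]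
end
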